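/- The denotation of the intersection of two acyclic ECTA nodes equals the intersection of their denotations: ⟦n₁ ⊓ n₂⟧ = ⟦n₁⟧ ∩ ⟦n₂⟧. -/

import Mathlib

universe u
variable {S : Type u}

/-- Terms over a signature: a symbol applied to a list of child terms. -/
inductive Term (S : Type u) where
  | mk : S → List (Term S) → Term S

/-- The i-th child of a term, if it exists. -/
def Term.child : Term S → ℕ → Option (Term S)
  | .mk _ ts, i => ts[i]?

/-- Subterm of `t` at path `p` (partial). -/
def subAt : List ℕ → Term S → Option (Term S)
  | [], t => some t
  | i :: p, t => (t.child i).bind (subAt p)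

/-- A term satisfies a path equivalence class `c` if the subterms at
all paths of `c` exist and are equal. -/
def pecSat (c : Set (List ℕ)) (t : Term S) : Prop :=
  ∃ t', ∀ p ∈ c, subAt p t = some t'

/-- A term satisfies a path constraint set if it satisfies each member PEC. -/
def pcsSat (C : Set (Set (List ℕ))) (t : Term S) : Prop :=
  ∀ c ∈ C, pecSat c t

/-- A PCS is closed if whenever `p', p'' ∈ c₁ ∈ C` and `p'.p ∈ c₂ ∈ C`,
then also `p''.p ∈ c₂`. -/
def Closed (C : Set (Set (List ℕ))) : Prop :=
  ∀ c₁ ∈ C, ∀ c₂ ∈ C, ∀ p' p'' p : List ℕ,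
    p' ∈ c₁ → p'' ∈ c₁ → p' ++ p ∈ c₂ → p'' ++ p ∈ c₂

/-- A set of paths is prefix-free if no member is a proper prefix of another. -/
def PrefixFree (c : Set (List ℕ)) : Prop :=
  ∀ p ∈ c, ∀ q ∈ c, p <+: q → p = q

/-- Well-formed terms with respect to an arity function. -/
inductive WFT (ar : S → ℕ) : Term S → Prop where
  | mk {s : S} {ts : List (Term S)} :
      ts.length = ar s → (∀ t ∈ ts, WFT ar t) → WFT ar (Term.mk s ts)

mutual
/-- An acyclic ECTA node (state): a finite list of transitions. -/
inductive Node (S : Type u) where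
  | mk : List (Edge S) → Node S
/-- An ECTA transition: a symbol, child nodes, and a path constraint set,
or the empty transition `⊥`. -/
inductive Edge (S : Type u) where
  | mk : S → List (Node S) → Set (Set (List ℕ)) → Edge S
  | bot : Edge S
end

mutual
/-- Acceptance of a term by a node. -/
inductive AccN : Node S → Term S → Prop where
  | intro {es : List (Edge S)} {e : Edge S} {t : Term S} :
      e ∈ es → AccE e t → AccN (Node.mk es) t
/-- Acceptance of a term by a transition: the symbols match, each child term
is accepted by the corresponding child node, and the term satisfies the
constraint set. -/
inductive AccE : Edge S → Term S → Prop where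
  | intro {s : S} {ns : List (Node S)} {C : Set (Set (List ℕ))} {ts : List (Term S)} :
      ts.length = ns.length →
      (∀ i (h1 : i < ns.length) (h2 : i < ts.length), AccN (ns[i]'h1) (ts[i]'h2)) →
      pcsSat C (Term.mk s ts) →
      AccE (Edge.mk s ns C) (Term.mk s ts)
end

/-- Denotation of a node. -/
def denN (n : Node S) : Set (Term S) := {t | AccN n t}
/-- Denotation of a transition. -/
def denE (e : Edge S) : Set (Term S) := {t | AccE e t}

/-- Union of two nodes: merge their transitions. -/
def Node.union : Node S → Node S → Node S
  | .mk es₁, .mk es₂ => .mk (es₁ ++ es₂)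

/-- The empty node `⊥`. -/
def botN : Node S := Node.mk []

/-- Consistency of a PCS: some term satisfies it. -/
def Consistent (S : Type u) (C : Set (Set (List ℕ))) : Prop :=
  ∃ t : Term S, pcsSat C t

open Classical in
mutual
/-- Intersection of two nodes: pairwise intersection of their transitions. -/
noncomputable def interN : Node S → Node S → Node S
  | .mk es₁, .mk es₂ => .mk (interEdges es₁ es₂)
  termination_by n₁ n₂ => sizeOf n₁ + sizeOf n₂
noncomputable def interEdges : List (Edge S) → List (Edge S) → List (Edge S)
  | [], _ => []
  | e :: es, es₂ => interEdgeList e es₂ ++ interEdges es es₂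
  termination_by es₁ es₂ => sizeOf es₁ + sizeOf es₂
noncomputable def interEdgeList : Edge S → List (Edge S) → List (Edge S)
  | _, [] => []
  | e₁, e₂ :: es => interE e₁ e₂ :: interEdgeList e₁ es
  termination_by e es => sizeOf e + sizeOf es
/-- Intersection of two transitions: same symbol, pointwise child
intersection, union of constraint sets when consistent; `⊥` otherwise. -/
noncomputable def interE : Edge S → Edge S → Edge S
  | .bot, _ => .bot
  | .mk _ _ _, .bot => .bot
  | .mk s₁ ns₁ C₁, .mk s₂ ns₂ C₂ =>
    if s₁ = s₂ ∧ ns₁.length = ns₂.length ∧ Consistent S (C₁ ∪ C₂)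
    then .mk s₁ (interNodes ns₁ ns₂) (C₁ ∪ C₂)
    else .bot
  termination_by e₁ e₂ => sizeOf e₁ + sizeOf e₂
noncomputable def interNodes : List (Node S) → List (Node S) → List (Node S)
  | [], _ => []
  | _ :: _, [] => []
  | n₁ :: ns₁, n₂ :: ns₂ => interN n₁ n₂ :: interNodes ns₁ ns₂
  termination_by ns₁ ns₂ => sizeOf ns₁ + sizeOf ns₂
  decreasing_by all_goals (simp; omega)
end


lemma accN_mk_iff {es : List (Edge S)} {t : Term S} :
    AccN (Node.mk es) t ↔ ∃ e ∈ es, AccE e t := by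
  constructor
  · intro h; cases h with | intro he ha => exact ⟨_, he, ha⟩
  · rintro ⟨e, he, ha⟩; exact AccN.intro he ha

lemma not_accE_bot {t : Term S} : ¬ AccE Edge.bot t := by
  intro h; cases h

lemma mem_interEdgeList {e : Edge S} {e₁ : Edge S} {es₂ : List (Edge S)} :
    e ∈ interEdgeList e₁ es₂ ↔ ∃ e₂ ∈ es₂, e = interE e₁ e₂ := by
  induction es₂ with
  | nil => simp [interEdgeList]
  | cons x xs ih => simp [interEdgeList, ih]

lemma mem_interEdges {e : Edge S} {es₁ es₂ : List (Edge S)} :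
    e ∈ interEdges es₁ es₂ ↔ ∃ e₁ ∈ es₁, ∃ e₂ ∈ es₂, e = interE e₁ e₂ := by
  induction es₁ with
  | nil => simp [interEdges]
  | cons x xs ih =>
    simp [interEdges, ih, mem_interEdgeList]

lemma pcsSat_union {C₁ C₂ : Set (Set (List ℕ))} {t : Term S} :
    pcsSat (C₁ ∪ C₂) t ↔ pcsSat C₁ t ∧ pcsSat C₂ t := by
  constructor
  · intro h; exact ⟨fun c hc => h c (Or.inl hc), fun c hc => h c (Or.inr hc)⟩
  · rintro ⟨h₁, h₂⟩ c hc; cases hc with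
    | inl h => exact h₁ c h
    | inr h => exact h₂ c h

lemma interNodes_length {ns₁ ns₂ : List (Node S)} :
    (interNodes ns₁ ns₂).length = min ns₁.length ns₂.length := by
  induction ns₁ generalizing ns₂ with
  | nil => simp [interNodes]
  | cons x xs ih =>
    cases ns₂ with
    | nil => simp [interNodes]
    | cons y ys => simp [interNodes, ih]

lemma interNodes_get {ns₁ ns₂ : List (Node S)} {i : ℕ}
    (h : i < (interNodes ns₁ ns₂).length) (h₁ : i < ns₁.length) (h₂ : i < ns₂.length) :
    (interNodes ns₁ ns₂)[i] = interN ns₁[i] ns₂[i] := by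
  induction ns₁ generalizing ns₂ i with
  | nil => simp at h₁
  | cons x xs ih =>
    cases ns₂ with
    | nil => simp at h₂
    | cons y ys =>
      cases i with
      | zero => simp [interNodes]
      | succ n =>
        simp only [interNodes, List.getElem_cons_succ]
        exact ih (by simpa [interNodes] using h) (by simpa using h₁) (by simpa using h₂)

lemma accE_interE {s₁ s₂ : S} {ns₁ ns₂ : List (Node S)} {C₁ C₂ : Set (Set (List ℕ))}
    {t : Term S}
    (IH : ∀ i (h1 : i < ns₁.length) (h2 : i < ns₂.length) (u : Term S),
      AccN (interN ns₁[i] ns₂[i]) u ↔ AccN ns₁[i] u ∧ AccN ns₂[i] u) :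
    AccE (interE (.mk s₁ ns₁ C₁) (.mk s₂ ns₂ C₂)) t ↔
      AccE (.mk s₁ ns₁ C₁) t ∧ AccE (.mk s₂ ns₂ C₂) t := by
  rw [interE]
  split
  · rename_i hcond
    obtain ⟨hs, hlen, hcons⟩ := hcond
    subst hs
    constructor
    · intro h
      cases h with
      | intro hl hch hpcs =>
        rename_i ts
        have hlts : ts.length = ns₁.length := by
          rw [hl, interNodes_length]; omega
        have hpcs' := pcsSat_union.mp hpcs
        constructor
        · exact AccE.intro hlts (fun i h1 h2 => by
            have := hch i (by rw [interNodes_length]; omega) h2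
            rw [interNodes_get _ h1 (by omega)] at this
            exact ((IH i h1 (by omega) _).mp this).1) hpcs'.1
        · exact AccE.intro (by omega) (fun i h1 h2 => by
            have := hch i (by rw [interNodes_length]; omega) h2
            rw [interNodes_get _ (by omega) h1] at this
            exact ((IH i (by omega) h1 _).mp this).2) hpcs'.2
    · rintro ⟨h₁, h₂⟩
      cases h₁ with
      | intro hl₁ hch₁ hpcs₁ =>
        rename_i ts
        cases h₂ with
        | intro hl₂ hch₂ hpcs₂ =>
          refine AccE.intro (by rw [interNodes_length]; omega)
            (fun i h1 h2 => ?_) (pcsSat_union.mpr ⟨hpcs₁, hpcs₂⟩)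
          rw [interNodes_get h1 (by rw [interNodes_length] at h1; omega)
            (by rw [interNodes_length] at h1; omega)]
          exact (IH i _ _ _).mpr ⟨hch₁ i _ h2, hch₂ i _ h2⟩
  · rename_i hcond
    constructor
    · intro h; exact absurd h not_accE_bot
    · rintro ⟨h₁, h₂⟩
      cases h₁ with
      | intro hl₁ hch₁ hpcs₁ =>
        rename_i ts
        cases h₂ with
        | intro hl₂ hch₂ hpcs₂ =>
          exact absurd ⟨rfl, by omega,
            ⟨_, pcsSat_union.mpr ⟨hpcs₁, hpcs₂⟩⟩⟩ hcond

lemma node_sizeOf_lt {e : Edge S} {es : List (Edge S)} (h : e ∈ es) :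
    sizeOf e < sizeOf (Node.mk es) := by
  have := List.sizeOf_lt_of_mem h
  simp only [Node.mk.sizeOf_spec]
  omega

lemma child_sizeOf_lt {n : Node S} {s : S} {ns : List (Node S)}
    {C : Set (Set (List ℕ))} (h : n ∈ ns) :
    sizeOf n < sizeOf (Edge.mk s ns C) := by
  have := List.sizeOf_lt_of_mem h
  simp only [Edge.mk.sizeOf_spec]
  omega

lemma accN_interN (N : ℕ) :
    ∀ n₁ n₂ : Node S, sizeOf n₁ + sizeOf n₂ < N →
      ∀ t, AccN (interN n₁ n₂) t ↔ AccN n₁ t ∧ AccN n₂ t := by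
  induction N with
  | zero => intro n₁ n₂ h; omega
  | succ N ih =>
    rintro ⟨es₁⟩ ⟨es₂⟩ hsz t
    rw [interN, accN_mk_iff, accN_mk_iff, accN_mk_iff]
    constructor
    · rintro ⟨e, he, ha⟩
      obtain ⟨e₁, he₁, e₂, he₂, rfl⟩ := mem_interEdges.mp he
      cases e₁ with
      | bot => rw [interE] at ha; exact absurd ha not_accE_bot
      | mk s₁ nn₁ C₁ =>
        cases e₂ with
        | bot => rw [interE] at ha; exact absurd ha not_accE_bot
        | mk s₂ nn₂ C₂ =>
          have h₁ := node_sizeOf_lt he₁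
          have h₂ := node_sizeOf_lt he₂
          have hIH : ∀ i (h1 : i < nn₁.length) (h2 : i < nn₂.length) (u : Term S),
              AccN (interN nn₁[i] nn₂[i]) u ↔ AccN nn₁[i] u ∧ AccN nn₂[i] u := by
            intro i hh1 hh2 u
            have c₁ := child_sizeOf_lt (s := s₁) (C := C₁) (List.getElem_mem hh1)
            have c₂ := child_sizeOf_lt (s := s₂) (C := C₂) (List.getElem_mem hh2)
            exact ih _ _ (by omega) u
          have := (accE_interE hIH).mp ha
          exact ⟨⟨_, he₁, this.1⟩, ⟨_, he₂, this.2⟩⟩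
    · rintro ⟨⟨e₁, he₁, ha₁⟩, ⟨e₂, he₂, ha₂⟩⟩
      refine ⟨interE e₁ e₂, mem_interEdges.mpr ⟨e₁, he₁, e₂, he₂, rfl⟩, ?_⟩
      cases e₁ with
      | bot => exact absurd ha₁ not_accE_bot
      | mk s₁ nn₁ C₁ =>
        cases e₂ with
        | bot => exact absurd ha₂ not_accE_bot
        | mk s₂ nn₂ C₂ =>
          have h₁ := node_sizeOf_lt he₁
          have h₂ := node_sizeOf_lt he₂
          have hIH : ∀ i (h1 : i < nn₁.length) (h2 : i < nn₂.length) (u : Term S),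
              AccN (interN nn₁[i] nn₂[i]) u ↔ AccN nn₁[i] u ∧ AccN nn₂[i] u := by
            intro i hh1 hh2 u
            have c₁ := child_sizeOf_lt (s := s₁) (C := C₁) (List.getElem_mem hh1)
            have c₂ := child_sizeOf_lt (s := s₂) (C := C₂) (List.getElem_mem hh2)
            exact ih _ _ (by omega) u
          exact (accE_interE hIH).mpr ⟨ha₁, ha₂⟩

/-- Correctness of ECTA intersection: the denotation of the intersection of
two nodes is the intersection of their denotations. -/
theorem denN_inter (n₁ n₂ : Node S) :
    denN (interN n₁ n₂) = denN n₁ ∩ denN n₂ := by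
  ext t
  exact accN_interN (sizeOf n₁ + sizeOf n₂ + 1) n₁ n₂ (by omega) t
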